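/- arXiv:1403.7946 — 5 statements merged into one kernel-verified Lean document; each statement's English description precedes it below -/
import Mathlib

section
/- For any A, B in Sp(2g,ℤ) (or Sp(2g,ℝ)), the bilinear form ⟨(x₁,y₁),(x₂,y₂)⟩_{A,B} := (x₁+y₁)·J(I−B)y₂ on the vector space V_{A,B} = {(x,y) ∈ ℝ^{2g}×ℝ^{2g} : (A⁻¹−I)x + (B−I)y = 0} is symmetric. -/
/-!
Write `ω(u, v) = u ⬝ᵥ J v` and put `c = (A⁻¹ - 1) x = -(B - 1) y` on `V_{A,B}`, so that the form
is `ω(x₁ + y₁, c₂)`. For any `M` preserving `ω`, expanding `ω((M - 1) u, (M - 1) v)` gives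
`ω(u, (M - 1) v) + ω((M - 1) u, v) = -ω((M - 1) u, (M - 1) v)`. Applied to `M = A⁻¹` on the
`x`-parts and to `M = B` on the `y`-parts, the two right-hand sides are `∓ω(c₁, c₂)` and cancel,
leaving `ω(x₁ + y₁, c₂) + ω(c₁, x₂ + y₂) = 0`; skew-symmetry of `ω` turns this into symmetry.
-/

open Matrix

/-- The standard symplectic matrix J = [[0, I_g], [-I_g, 0]]. -/
def Jstd (g : ℕ) : Matrix (Fin g ⊕ Fin g) (Fin g ⊕ Fin g) ℝ :=
  Matrix.fromBlocks 0 1 (-1) 0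

section BilinearForm

variable {n R : Type*} [Fintype n] [CommRing R]

theorem mulVec_dotProduct_mulVec_mulVec (P K Q : Matrix n n R) (u v : n → R) :
    (P *ᵥ u) ⬝ᵥ (K *ᵥ (Q *ᵥ v)) = u ⬝ᵥ ((Pᵀ * K * Q) *ᵥ v) := by
  rw [← mulVec_mulVec, ← mulVec_mulVec, dotProduct_mulVec u Pᵀ, vecMul_transpose]

theorem dotProduct_mulVec_sub_one_add_eq_neg [DecidableEq n]
    {K M : Matrix n n R} (hM : Mᵀ * K * M = K) (u v : n → R) :
    u ⬝ᵥ (K *ᵥ ((M - 1) *ᵥ v)) + ((M - 1) *ᵥ u) ⬝ᵥ (K *ᵥ v)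
      = -(((M - 1) *ᵥ u) ⬝ᵥ (K *ᵥ ((M - 1) *ᵥ v))) := by
  have key : K * (M - 1) + (M - 1)ᵀ * K = -((M - 1)ᵀ * K * (M - 1)) := by
    simp only [transpose_sub, transpose_one, Matrix.mul_sub, Matrix.sub_mul, hM,
      Matrix.mul_one, Matrix.one_mul]
    abel
  have h₁ := mulVec_dotProduct_mulVec_mulVec 1 K (M - 1) u v
  have h₂ := mulVec_dotProduct_mulVec_mulVec (M - 1) K 1 u v
  have h₃ := mulVec_dotProduct_mulVec_mulVec (M - 1) K (M - 1) u v
  simp only [one_mulVec, transpose_one, Matrix.one_mul, Matrix.mul_one] at h₁ h₂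
  rw [h₁, h₂, h₃, ← dotProduct_add, ← add_mulVec, key, neg_mulVec, dotProduct_neg]

theorem dotProduct_mulVec_swap_of_transpose_eq_neg
    {K : Matrix n n R} (hK : Kᵀ = -K) (u v : n → R) :
    u ⬝ᵥ (K *ᵥ v) = -(v ⬝ᵥ (K *ᵥ u)) := by
  rw [dotProduct_mulVec, ← mulVec_transpose, hK, neg_mulVec, neg_dotProduct, dotProduct_comm]

end BilinearForm

theorem Jstd_eq_neg_J (g : ℕ) : Jstd g = -J (Fin g) ℝ := by
  rw [Jstd, J, fromBlocks_neg, neg_zero, neg_neg]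

theorem Jstd_transpose (g : ℕ) : (Jstd g)ᵀ = -Jstd g := by
  rw [Jstd_eq_neg_J, transpose_neg, J_transpose]

theorem transpose_mul_Jstd_mul {g : ℕ} {A : Matrix (Fin g ⊕ Fin g) (Fin g ⊕ Fin g) ℝ}
    (hA : A ∈ symplecticGroup (Fin g) ℝ) : Aᵀ * Jstd g * A = Jstd g := by
  rw [Jstd_eq_neg_J, Matrix.mul_neg, Matrix.neg_mul, SymplecticGroup.mem_iff'.mp hA]

theorem nonsing_inv_mem_symplecticGroup {l R : Type*} [DecidableEq l] [Fintype l] [CommRing R]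
    {A : Matrix (l ⊕ l) (l ⊕ l) R} (hA : A ∈ symplecticGroup l R) :
    A⁻¹ ∈ symplecticGroup l R := by
  simpa only [SymplecticGroup.coe_inv'] using ((⟨A, hA⟩ : symplecticGroup l R)⁻¹).2

/-- The Meyer bilinear form ⟨(x₁,y₁),(x₂,y₂)⟩_{A,B} = (x₁+y₁)·J(I−B)y₂ is symmetric
on V_{A,B} = {(x,y) : (A⁻¹−I)x + (B−I)y = 0}. -/
theorem meyer_form_symm (g : ℕ) (A B : Matrix (Fin g ⊕ Fin g) (Fin g ⊕ Fin g) ℝ)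
    (hA : A ∈ Matrix.symplecticGroup (Fin g) ℝ)
    (hB : B ∈ Matrix.symplecticGroup (Fin g) ℝ)
    (x₁ y₁ x₂ y₂ : Fin g ⊕ Fin g → ℝ)
    (h1 : (A⁻¹ - 1).mulVec x₁ + (B - 1).mulVec y₁ = 0)
    (h2 : (A⁻¹ - 1).mulVec x₂ + (B - 1).mulVec y₂ = 0) :
    (x₁ + y₁) ⬝ᵥ ((Jstd g * (1 - B)).mulVec y₂)
      = (x₂ + y₂) ⬝ᵥ ((Jstd g * (1 - B)).mulVec y₁) := by
  have hx := dotProduct_mulVec_sub_one_add_eq_neg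
    (transpose_mul_Jstd_mul (nonsing_inv_mem_symplecticGroup hA)) x₁ x₂
  have hy := dotProduct_mulVec_sub_one_add_eq_neg (transpose_mul_Jstd_mul hB) y₁ y₂
  rw [eq_neg_of_add_eq_zero_left h1, eq_neg_of_add_eq_zero_left h2] at hx
  have skew := dotProduct_mulVec_swap_of_transpose_eq_neg (Jstd_transpose g)
  rw [← mulVec_mulVec, ← mulVec_mulVec, ← neg_sub B 1, neg_mulVec, neg_mulVec,
    skew (x₂ + y₂)]
  simp only [mulVec_neg, dotProduct_neg, neg_dotProduct, neg_neg, mulVec_add, dotProduct_add,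
    add_dotProduct] at hx hy ⊢
  linarith
end

section
/- The bilinear form ⟨(ξ,η),(ξ′,η′)⟩_{α,β} = μ(ξ+η, (id−β)η′) on U_{α,β} = {(ξ,η) ∈ H×H : (α⁻¹−id)ξ + (β−id)η = 0} is symmetric, for any symplectomorphisms α, β of a finite-dimensional real symplectic space (H, μ). -/
/-!
From `h`, `α⁻¹ ξ = ξ + (η - β η)`, so invariance of `μ` under `α` gives
`μ(ξ + d, ξ' + d') = μ(ξ, ξ')` with `d = η - β η`, `d' = η' - β η'`, i.e.
`μ(ξ, d') - μ(ξ', d) = -μ(d, d')`. Invariance under `β` gives `μ(η, d') - μ(η', d) = μ(d, d')`.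
Adding the two identities is the claimed symmetry.
-/

namespace LinearMap.IsAlt

variable {R M : Type*} [CommRing R] [AddCommGroup M] [Module R M] {B : M →ₗ[R] M →ₗ[R] R}

theorem apply_add_add (hB : B.IsAlt) (x u y v : M) :
    B (x + u) (y + v) = B x y + (B x v - B y u) + B u v := by
  simp only [map_add, add_apply, ← hB.neg y u]
  abel

theorem apply_sub_apply_sub_of_isOrthogonal (hB : B.IsAlt) {f : M → M}
    (hf : LinearMap.IsOrthogonal B f) (x y : M) :
    B (x - f x) (y - f y) = B x (y - f y) - B y (x - f x) := by
  simp only [map_sub, sub_apply, hf x y, ← hB.neg x y, ← hB.neg (f x) y]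
  abel

end LinearMap.IsAlt

theorem U_form_symm_general {H : Type} [AddCommGroup H] [Module ℝ H]
    (μ : H →ₗ[ℝ] H →ₗ[ℝ] ℝ)
    (halt : ∀ x, μ x x = 0)
    (α β : H ≃ₗ[ℝ] H)
    (hα : ∀ x y, μ (α x) (α y) = μ x y)
    (hβ : ∀ x y, μ (β x) (β y) = μ x y)
    (ξ η ξ' η' : H)
    (h : α.symm ξ - ξ + (β η - η) = 0)
    (h' : α.symm ξ' - ξ' + (β η' - η') = 0) :
    μ (ξ + η) (η' - β η') = μ (ξ' + η') (η - β η) := by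
  have hB : μ.IsAlt := halt
  have hξ : α.symm ξ = ξ + (η - β η) := eq_of_sub_eq_zero (by rw [← h]; abel)
  have hξ' : α.symm ξ' = ξ' + (η' - β η') := eq_of_sub_eq_zero (by rw [← h']; abel)
  have hα' : μ (ξ + (η - β η)) (ξ' + (η' - β η')) = μ ξ ξ' := by
    rw [← hξ, ← hξ']
    simpa using (hα (α.symm ξ) (α.symm ξ')).symm
  have hβ' := hB.apply_sub_apply_sub_of_isOrthogonal hβ η η'
  rw [hB.apply_add_add] at hα'
  rw [map_add, LinearMap.add_apply, map_add, LinearMap.add_apply]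
  linarith

/-- The form ⟨(ξ,η),(ξ′,η′)⟩ = μ(ξ+η, (id−β)η′) is symmetric on
U_{α,β} = {(ξ,η) : (α⁻¹−id)ξ + (β−id)η = 0}. -/
theorem U_form_symm {H : Type} [AddCommGroup H] [Module ℝ H]
    [FiniteDimensional ℝ H]
    (μ : H →ₗ[ℝ] H →ₗ[ℝ] ℝ)
    (halt : ∀ x, μ x x = 0)
    (hnd : ∀ x, (∀ y, μ x y = 0) → x = 0)
    (α β : H ≃ₗ[ℝ] H)
    (hα : ∀ x y, μ (α x) (α y) = μ x y)
    (hβ : ∀ x y, μ (β x) (β y) = μ x y)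
    (ξ η ξ' η' : H)
    (h : α.symm ξ - ξ + (β η - η) = 0)
    (h' : α.symm ξ' - ξ' + (β η' - η') = 0) :
    μ (ξ + η) (η' - β η') = μ (ξ' + η') (η - β η) :=
  U_form_symm_general μ halt α β hα hβ ξ η ξ' η' h h'
end

section
/- Let τ : G × G → ℤ be a function on a group G that is a normalized 2-cocycle, i.e., τ(g,1) = τ(1,g) = 0 for all g and τ(g₁,g₂) + τ(g₁g₂,g₃) = τ(g₁, g₂g₃) + τ(g₂,g₃) for all g₁,g₂,g₃. Define, for a word w = α₁⋯α_n with α₁⋯α_n = 1 in G, I(w) := −Σ_{j=1}^{n−1} τ(α_{n−j}, α_{n−j+1}⋯α_n). Then I is invariant under cyclic permutation when τ is additionally symmetric (τ(g,h) = τ(h,g)) and conjugation-invariant (τ(kgk⁻¹, khk⁻¹) = τ(g,h)): that is, I(α₁α₂⋯α_n) = I(α₂⋯α_nα₁). -/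
/-!
Write `S(w) = Σᵢ τ(αᵢ, α_{i+1}⋯α_n)`, so that `I = -S` (the last term is `τ(α_n, 1) = 0`).
Prepending `a` to `w` adds `τ(a, w.prod)`, while the cocycle identity shows that appending `a`
adds `τ(w.prod, a)`. When `a · w.prod = 1` these are `τ(a, a⁻¹)` and `τ(a⁻¹, a)`, which agree
for every normalized cocycle by the cocycle identity at `(a, a⁻¹, a)`.
-/

/-- I(w) = −Σ_{j=1}^{n−1} τ(α_{n−j}, α_{n−j+1}⋯α_n), i.e. minus the sum over
positions i = 1, …, n−1 of τ(αᵢ, α_{i+1}⋯α_n). -/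
def Iword {G : Type} [Group G] (τ : G → G → ℤ) (l : List G) : ℤ :=
  -∑ i ∈ Finset.range (l.length - 1), τ (l.getD i 1) ((l.drop (i + 1)).prod)

section

variable {G : Type*} [Group G] (τ : G → G → ℤ)

def suffixSum : List G → ℤ
  | [] => 0
  | x :: l => τ x l.prod + suffixSum l

@[simp] lemma suffixSum_nil : suffixSum τ [] = 0 := rfl

@[simp] lemma suffixSum_cons (x : G) (l : List G) :
    suffixSum τ (x :: l) = τ x l.prod + suffixSum τ l := rfl

lemma suffixSum_eq_sum_range (l : List G) :
    suffixSum τ l = ∑ i ∈ Finset.range l.length, τ (l.getD i 1) (l.drop (i + 1)).prod := by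
  induction l with
  | nil => rfl
  | cons x l ih => simp [Finset.sum_range_succ', ih, add_comm]

lemma suffixSum_append_singleton (hnorm : ∀ g : G, τ g 1 = 0 ∧ τ 1 g = 0)
    (hcoc : ∀ g₁ g₂ g₃ : G, τ g₁ g₂ + τ (g₁ * g₂) g₃ = τ g₁ (g₂ * g₃) + τ g₂ g₃)
    (a : G) (l : List G) : suffixSum τ (l ++ [a]) = suffixSum τ l + τ l.prod a := by
  induction l with
  | nil => simp [(hnorm a).1, (hnorm a).2]
  | cons x l ih =>
    simp only [List.cons_append, suffixSum_cons, List.prod_append, ih, List.prod_cons,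
      List.prod_nil, mul_one]
    linarith [hcoc x l.prod a]

lemma cocycle_inv_comm (hnorm : ∀ g : G, τ g 1 = 0 ∧ τ 1 g = 0)
    (hcoc : ∀ g₁ g₂ g₃ : G, τ g₁ g₂ + τ (g₁ * g₂) g₃ = τ g₁ (g₂ * g₃) + τ g₂ g₃) (a : G) :
    τ a a⁻¹ = τ a⁻¹ a := by
  have h := hcoc a a⁻¹ a
  rwa [mul_inv_cancel, inv_mul_cancel, (hnorm a).1, (hnorm a).2, add_zero, zero_add] at h

end

lemma Iword_eq_neg_suffixSum {G : Type} [Group G] (τ : G → G → ℤ) (hright : ∀ g : G, τ g 1 = 0)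
    (l : List G) : Iword τ l = -suffixSum τ l := by
  rcases l.eq_nil_or_concat with rfl | ⟨l, a, rfl⟩
  · rfl
  rw [Iword, suffixSum_eq_sum_range]
  simp [Finset.sum_range_succ, hright]

theorem Iword_cyclic_general {G : Type} [Group G] (τ : G → G → ℤ)
    (hnorm : ∀ g : G, τ g 1 = 0 ∧ τ 1 g = 0)
    (hcoc : ∀ g₁ g₂ g₃ : G, τ g₁ g₂ + τ (g₁ * g₂) g₃ = τ g₁ (g₂ * g₃) + τ g₂ g₃)
    (a : G) (l : List G) (hprod : (a :: l).prod = 1) :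
    Iword τ (a :: l) = Iword τ (l ++ [a]) := by
  have hl : l.prod = a⁻¹ := eq_inv_of_mul_eq_one_right (by simpa using hprod)
  have hright : ∀ g : G, τ g 1 = 0 := fun g => (hnorm g).1
  rw [Iword_eq_neg_suffixSum τ hright, Iword_eq_neg_suffixSum τ hright, suffixSum_cons,
    suffixSum_append_singleton τ hnorm hcoc, hl, cocycle_inv_comm τ hnorm hcoc, add_comm]

/-- For a normalized, symmetric, conjugation-invariant 2-cocycle τ, the quantity
I(w) is invariant under cyclic permutation of a word whose product is 1. -/
theorem Iword_cyclic {G : Type} [Group G] (τ : G → G → ℤ)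
    (hnorm : ∀ g : G, τ g 1 = 0 ∧ τ 1 g = 0)
    (hcoc : ∀ g₁ g₂ g₃ : G, τ g₁ g₂ + τ (g₁ * g₂) g₃ = τ g₁ (g₂ * g₃) + τ g₂ g₃)
    (hsym : ∀ g h : G, τ g h = τ h g)
    (hconj : ∀ k g h : G, τ (k * g * k⁻¹) (k * h * k⁻¹) = τ g h)
    (a : G) (l : List G) (hprod : (a :: l).prod = 1) :
    Iword τ (a :: l) = Iword τ (l ++ [a]) :=
  Iword_cyclic_general τ hnorm hcoc a l hprod
end

section
/- Let τ : G × G → ℤ be a normalized 2-cocycle on a group G. For words w = α₁⋯α_m and w′ = β₁⋯β_n in G with α₁⋯α_m = 1 and β₁⋯β_n = 1, define I(w) = −Σ_{j=1}^{m−1} τ(α_{m−j}, α_{m−j+1}⋯α_m). Then I is additive under concatenation: I(ww′) = I(w) + I(w′). -/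
theorem Iword_cons {G : Type} [Group G] (τ : G → G → ℤ) {a : G} (ha : τ a 1 = 0) (l : List G) :
    Iword τ (a :: l) = Iword τ l - τ a l.prod := by
  cases l with
  | nil => simp [Iword, ha]
  | cons b l =>
    simp only [Iword, List.length_cons, Nat.add_sub_cancel, Finset.sum_range_succ' _ l.length,
      List.getD_cons_succ, List.getD_cons_zero, List.drop_succ_cons, List.drop_zero]
    ring

theorem Iword_additive_general {G : Type} [Group G] (τ : G → G → ℤ)
    (hnorm : ∀ g : G, τ g 1 = 0 ∧ τ 1 g = 0)
    (l₁ l₂ : List G) (h₂ : l₂.prod = 1) :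
    Iword τ (l₁ ++ l₂) = Iword τ l₁ + Iword τ l₂ := by
  induction l₁ with
  | nil => simp [Iword]
  | cons a l₁ ih =>
    rw [List.cons_append, Iword_cons τ (hnorm a).1, Iword_cons τ (hnorm a).1, ih,
      List.prod_append, h₂, mul_one]
    ring

/-- For a normalized 2-cocycle τ, I is additive under concatenation of words whose
products are the identity. -/
theorem Iword_additive {G : Type} [Group G] (τ : G → G → ℤ)
    (hnorm : ∀ g : G, τ g 1 = 0 ∧ τ 1 g = 0)
    (hcoc : ∀ g₁ g₂ g₃ : G, τ g₁ g₂ + τ (g₁ * g₂) g₃ = τ g₁ (g₂ * g₃) + τ g₂ g₃)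
    (l₁ l₂ : List G) (h₁ : l₁.prod = 1) (h₂ : l₂.prod = 1) :
    Iword τ (l₁ ++ l₂) = Iword τ l₁ + Iword τ l₂ :=
  Iword_additive_general τ hnorm l₁ l₂ h₂
end

section
/- Let (V, ω) be a finite-dimensional real symplectic vector space and L₁, L₂, L₃ Lagrangian subspaces. The Wall–Maslov form Ψ on W = (L₃ + L₁) ∩ L₂, Ψ(v, w) = ω(v, w₃) for any decomposition w = w₁ + w₃ with wᵢ ∈ Lᵢ, is a symmetric bilinear form on W. -/
/-!
Expanding ω(v, w) = 0 (both lie in the Lagrangian L₂) along the decompositions and using that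
L₁ and L₃ are isotropic leaves ω(v₁, w₃) + ω(v₃, w₁) = 0. Since L₃ is isotropic,
Ψ(v, w) = ω(v₁, w₃), which is therefore -ω(v₃, w₁) = ω(w₁, v₃) by skew-symmetry, and
ω(w₁, v₃) = Ψ(w, v) again by isotropy of L₃.
-/

variable {R M : Type*} [CommRing R] [AddCommGroup M] [Module R M]

theorem LinearMap.IsAlt.apply_add_right_eq_of_isotropic {ω : M →ₗ[R] M →ₗ[R] R}
    (halt : ω.IsAlt) {L₁ L₃ : Submodule R M}
    (hL₁ : ∀ x ∈ L₁, ∀ y ∈ L₁, ω x y = 0) (hL₃ : ∀ x ∈ L₃, ∀ y ∈ L₃, ω x y = 0)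
    {v₁ v₃ w₁ w₃ : M} (hv₁ : v₁ ∈ L₁) (hv₃ : v₃ ∈ L₃) (hw₁ : w₁ ∈ L₁) (hw₃ : w₃ ∈ L₃)
    (horth : ω (v₁ + v₃) (w₁ + w₃) = 0) :
    ω (v₁ + v₃) w₃ = ω w₁ v₃ := by
  have h₁ := hL₁ v₁ hv₁ w₁ hw₁
  have h₃ := hL₃ v₃ hv₃ w₃ hw₃
  have hcross : ω v₃ w₁ + ω v₁ w₃ = 0 := by
    simpa only [map_add, LinearMap.add_apply, h₁, h₃, zero_add, add_zero] using horth
  calc ω (v₁ + v₃) w₃ = ω v₁ w₃ := by rw [map_add, LinearMap.add_apply, h₃, add_zero]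
    _ = -ω v₃ w₁ := eq_neg_of_add_eq_zero_right hcross
    _ = ω w₁ v₃ := halt.neg v₃ w₁

theorem wall_form_symm_general {V : Type} [AddCommGroup V] [Module ℝ V]
    (ω : V →ₗ[ℝ] V →ₗ[ℝ] ℝ)
    (halt : ∀ x, ω x x = 0)
    (L₁ L₂ L₃ : Submodule ℝ V)
    (hL₁ : (∀ x ∈ L₁, ∀ y ∈ L₁, ω x y = 0) ∧
      Module.finrank ℝ L₁ = Module.finrank ℝ V / 2)
    (hL₂ : (∀ x ∈ L₂, ∀ y ∈ L₂, ω x y = 0) ∧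
      Module.finrank ℝ L₂ = Module.finrank ℝ V / 2)
    (hL₃ : (∀ x ∈ L₃, ∀ y ∈ L₃, ω x y = 0) ∧
      Module.finrank ℝ L₃ = Module.finrank ℝ V / 2)
    (v w : V) (hv : v ∈ (L₃ ⊔ L₁) ⊓ L₂) (hw : w ∈ (L₃ ⊔ L₁) ⊓ L₂)
    (v₁ v₃ w₁ w₃ : V)
    (hv₁ : v₁ ∈ L₁) (hv₃ : v₃ ∈ L₃) (hw₁ : w₁ ∈ L₁) (hw₃ : w₃ ∈ L₃)
    (hvdec : v = v₁ + v₃) (hwdec : w = w₁ + w₃) :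
    ω v w₃ = ω w v₃ := by
  have horth : ω (v₁ + v₃) (w₁ + w₃) = 0 := by
    rw [← hvdec, ← hwdec]
    exact hL₂.1 v hv.2 w hw.2
  have hΨ : ω v w₃ = ω w₁ v₃ := hvdec ▸
    LinearMap.IsAlt.apply_add_right_eq_of_isotropic halt hL₁.1 hL₃.1 hv₁ hv₃ hw₁ hw₃ horth
  rw [hΨ, hwdec, map_add, LinearMap.add_apply, hL₃.1 w₃ hw₃ v₃ hv₃, add_zero]

/-- The Wall–Maslov form Ψ(v,w) = ω(v,w₃) on W = (L₃+L₁) ∩ L₂ is symmetric. -/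
theorem wall_form_symm {V : Type} [AddCommGroup V] [Module ℝ V]
    [FiniteDimensional ℝ V]
    (ω : V →ₗ[ℝ] V →ₗ[ℝ] ℝ)
    (halt : ∀ x, ω x x = 0)
    (hnd : ∀ x, (∀ y, ω x y = 0) → x = 0)
    (L₁ L₂ L₃ : Submodule ℝ V)
    (hL₁ : (∀ x ∈ L₁, ∀ y ∈ L₁, ω x y = 0) ∧
      Module.finrank ℝ L₁ = Module.finrank ℝ V / 2)
    (hL₂ : (∀ x ∈ L₂, ∀ y ∈ L₂, ω x y = 0) ∧
      Module.finrank ℝ L₂ = Module.finrank ℝ V / 2)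
    (hL₃ : (∀ x ∈ L₃, ∀ y ∈ L₃, ω x y = 0) ∧
      Module.finrank ℝ L₃ = Module.finrank ℝ V / 2)
    (v w : V) (hv : v ∈ (L₃ ⊔ L₁) ⊓ L₂) (hw : w ∈ (L₃ ⊔ L₁) ⊓ L₂)
    (v₁ v₃ w₁ w₃ : V)
    (hv₁ : v₁ ∈ L₁) (hv₃ : v₃ ∈ L₃) (hw₁ : w₁ ∈ L₁) (hw₃ : w₃ ∈ L₃)
    (hvdec : v = v₁ + v₃) (hwdec : w = w₁ + w₃) :
    ω v w₃ = ω w v₃ :=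
  wall_form_symm_general ω halt L₁ L₂ L₃ hL₁ hL₂ hL₃ v w hv hw v₁ v₃ w₁ w₃ hv₁ hv₃ hw₁ hw₃ hvdec
    hwdec
end
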